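/- arXiv:2110.06875 — 5 statements merged into one kernel-verified Lean document; each statement's English description precedes it below -/
import Mathlib

section
/- Every housing market with partially ordered preferences admits an allocation in its core; in particular, the variant of the Top Trading Cycles algorithm that iteratively selects a cycle in the graph of undominated choices, removes its agents, and repeats, outputs a core allocation. -/
/-- A housing market: each agent `a` has a strict partial order `pref a` on agents,
where `pref a b c` means `a` prefers the house of `c` to the house of `b` (i.e. `b ≺_a c`). -/
structure HousingMarket (N : Type) where
  pref : N → N → N → Prop
  irrefl : ∀ a b, ¬ pref a b b
  trans : ∀ a b c d, pref a b c → pref a c d → pref a b d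

variable {N : Type} [Fintype N] [DecidableEq N]

/-- `(a,b)` is an arc of the acceptability graph `G^H` (including all loops). -/
def accepts (H : HousingMarket N) (a b : N) : Prop := a = b ∨ H.pref a a b

/-- An allocation: a permutation of the agents all of whose arcs are acceptable. -/
def IsAllocation (H : HousingMarket N) (X : N → N) : Prop :=
  Function.Bijective X ∧ ∀ a, accepts H a (X a)

/-- A blocking cycle for `X`: a directed cycle of the acceptability graph (given as a
nonempty duplicate-free list, with successor `c.next`) on which every agent strictly
prefers the house of her successor to the house she gets in `X`. -/
def IsBlockingCycle (H : HousingMarket N) (X : N → N) (c : List N) : Prop :=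
  c ≠ [] ∧ c.Nodup ∧
    ∀ (a : N) (h : a ∈ c), accepts H a (c.next a h) ∧ H.pref a (X a) (c.next a h)

/-- `X` is in the core of `H`. -/
def InCore (H : HousingMarket N) (X : N → N) : Prop :=
  IsAllocation H X ∧ ∀ c : List N, ¬ IsBlockingCycle H X c

/-- A digraph (given by its arc relation `R`) has a directed cycle. -/
def HasCycle (R : N → N → Prop) : Prop :=
  ∃ c : List N, c ≠ [] ∧ c.Nodup ∧ ∀ (a : N) (h : a ∈ c), R a (c.next a h)

/-- Preferences of every agent are strict total orders on her acceptable set. -/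
def StrictPrefs (H : HousingMarket N) : Prop :=
  ∀ a b c, accepts H a b → accepts H a c → b ≠ c → H.pref a b c ∨ H.pref a c b

/-- `H'` is a `(p,q)`-improvement of `H`: only `q`'s preferences change, they agree
on `N \ {p}`, and the value of `p`'s house weakly rises for `q`. -/
def IsPQImprovement (H H' : HousingMarket N) (p q : N) : Prop :=
  (∀ a, a ≠ q → H.pref a = H'.pref a) ∧
  (∀ a b, a ≠ p → b ≠ p → (H.pref q a b ↔ H'.pref q a b)) ∧
  (∀ a, H.pref q a p → H'.pref q a p)

/-- `H'` is a `p`-improvement of `H`: a finite composition of `(p,q)`-improvements. -/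
def IsPImprovement (H H' : HousingMarket N) (p : N) : Prop :=
  Relation.ReflTransGen (fun K K' => ∃ q, IsPQImprovement K K' p q) H H'

/-
Let every remaining agent point to an undominated choice among the remaining agents. The periodic
points of this map form a nonempty union of cycles; trading along all of them and recursing on the
other agents gives a core allocation. No agent on a removed cycle can take part in a cycle blocking
the final allocation, because the house she receives is undominated for her among all houses that
were still present when she left.
-/

open Function Set Equiv

namespace Function

variable {α : Type*}

theorem exists_iterate_mem_periodicPts [Finite α] (f : α → α) (x : α) :
    ∃ n, f^[n] x ∈ periodicPts f := by
  obtain ⟨m, n, hmn, h⟩ := Finite.exists_ne_map_eq_of_infinite fun n => f^[n] x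
  wlog hlt : m < n generalizing m n
  · exact this n m hmn.symm h.symm (by omega)
  refine ⟨m, n - m, by omega, ?_⟩
  change f^[n - m] (f^[m] x) = f^[m] x
  rw [← iterate_add_apply, Nat.sub_add_cancel hlt.le, h]

open Classical in
noncomputable def periodicPerm (f : α → α) : Perm α :=
  Perm.ofSubtype (Set.BijOn.equiv f (bijOn_periodicPts f))

open Classical in
theorem periodicPerm_apply_of_mem {f : α → α} {x : α} (hx : x ∈ periodicPts f) :
    periodicPerm f x = f x :=
  Perm.ofSubtype_apply_of_mem _ hx

open Classical in
theorem periodicPerm_apply_of_notMem {f : α → α} {x : α} (hx : x ∉ periodicPts f) :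
    periodicPerm f x = x :=
  Perm.ofSubtype_apply_of_not_mem _ hx

end Function

theorem Equiv.Perm.apply_mem_of_forall_notMem_apply_eq {α : Type*} {σ : Perm α} {s : Set α}
    (h : ∀ a ∉ s, σ a = a) {a : α} (ha : a ∈ s) : σ a ∈ s := by
  by_contra hσa
  rw [σ.injective (h _ hσa)] at hσa
  exact hσa ha

namespace HousingMarket

variable (H : HousingMarket N)

omit [DecidableEq N] in
theorem exists_undominated (a : N) {s : Set N} (hs : s.Nonempty) :
    ∃ b ∈ s, ∀ c ∈ s, ¬ H.pref a b c :=
  have : IsTrans N (flip (H.pref a)) := ⟨fun _ _ _ h₁ h₂ => H.trans a _ _ _ h₂ h₁⟩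
  have : Std.Irrefl (flip (H.pref a)) := ⟨H.irrefl a⟩
  (Finite.wellFounded_of_trans_of_irrefl (flip (H.pref a))).has_min s hs

omit [Fintype N] [DecidableEq N] in
theorem accepts_of_accepts_of_pref {a b c : N} (hab : accepts H a b) (hbc : H.pref a b c) :
    accepts H a c := by
  rcases hab with rfl | hab
  · exact Or.inr hbc
  · exact Or.inr (H.trans a a b c hab hbc)

def IsUndominatedChoice (W : Finset N) (a b : N) : Prop :=
  b ∈ W ∧ accepts H a b ∧ ∀ c ∈ W, ¬ H.pref a b c

omit [DecidableEq N] in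
theorem exists_isUndominatedChoice {W : Finset N} {a : N} (ha : a ∈ W) :
    ∃ b, H.IsUndominatedChoice W a b := by
  obtain ⟨b, ⟨hbW, hab⟩, hb⟩ := H.exists_undominated a (s := {b | b ∈ W ∧ accepts H a b})
    ⟨a, ha, Or.inl rfl⟩
  exact ⟨b, hbW, hab, fun c hc hbc => hb c ⟨hc, H.accepts_of_accepts_of_pref hab hbc⟩ hbc⟩

def IsCoreOn (W : Finset N) (σ : Perm N) : Prop :=
  (∀ a ∉ W, σ a = a) ∧ (∀ a, accepts H a (σ a)) ∧
    ∀ c : List N, c ≠ [] → (∀ a ∈ c, a ∈ W) → ¬ ∀ (a : N) (h : a ∈ c), H.pref a (σ a) (c.next a h)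

omit [Fintype N] in
theorem isCoreOn_empty : H.IsCoreOn ∅ 1 := by
  refine ⟨fun _ _ => rfl, fun _ => Or.inl rfl, fun c hc hcW _ => ?_⟩
  obtain ⟨a, ha⟩ := List.exists_mem_of_ne_nil c hc
  simpa using hcW a ha

variable {H} in
omit [Fintype N] in
theorem IsCoreOn.mul {W K : Finset N} (hKW : K ⊆ W) {τ σ : Perm N} (hτ : ∀ a ∉ K, τ a = a)
    (hτK : ∀ a ∈ K, H.IsUndominatedChoice W a (τ a)) (hσ : H.IsCoreOn (W \ K) σ) :
    H.IsCoreOn W (σ * τ) := by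
  obtain ⟨hσ_fix, hσ_acc, hσ_core⟩ := hσ
  have hK : ∀ a ∈ K, (σ * τ) a = τ a := fun a ha =>
    hσ_fix _ fun h => (Finset.mem_sdiff.mp h).2 (Perm.apply_mem_of_forall_notMem_apply_eq
      (s := (K : Set N)) hτ ha)
  have hnK : ∀ a ∉ K, (σ * τ) a = σ a := fun a ha => congrArg σ (hτ a ha)
  refine ⟨fun a ha => ?_, fun a => ?_, fun c hc hcW hblock => ?_⟩
  · have haK : a ∉ K := fun h => ha (hKW h)
    rw [hnK a haK, hσ_fix a (fun h => ha (Finset.mem_sdiff.mp h).1)]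
  · by_cases ha : a ∈ K
    · rw [hK a ha]; exact (hτK a ha).2.1
    · rw [hnK a ha]; exact hσ_acc a
  · by_cases hcK : ∃ a ∈ c, a ∈ K
    · obtain ⟨a, hac, haK⟩ := hcK
      have := hblock a hac
      rw [hK a haK] at this
      exact (hτK a haK).2.2 _ (hcW _ (List.next_mem _ _ _)) this
    · push Not at hcK
      refine hσ_core c hc (fun a ha => Finset.mem_sdiff.mpr ⟨hcW a ha, hcK a ha⟩) fun a ha => ?_
      rw [← hnK a (hcK a ha)]
      exact hblock a ha

omit [DecidableEq N] in
theorem exists_perm_isUndominatedChoice {W : Finset N} (hW : W.Nonempty) :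
    ∃ K ⊆ W, K.Nonempty ∧ ∃ τ : Perm N,
      (∀ a ∉ K, τ a = a) ∧ ∀ a ∈ K, H.IsUndominatedChoice W a (τ a) := by
  classical
  obtain ⟨x, hx⟩ := hW
  choose! g hg using fun a (ha : a ∈ W) => H.exists_isUndominatedChoice ha
  let f : N → N := fun a => if a ∈ W then g a else a
  have hf_mem : ∀ a ∈ W, f a = g a := fun a ha => if_pos ha
  have hf_notMem : ∀ a ∉ W, f a = a := fun a ha => if_neg ha
  have hf_maps : MapsTo f W W := fun a ha => (hf_mem a ha).symm ▸ (hg a ha).1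
  refine ⟨W.filter (· ∈ periodicPts f), Finset.filter_subset _ _, ?_, periodicPerm f, ?_, ?_⟩
  · obtain ⟨n, hn⟩ := exists_iterate_mem_periodicPts f x
    exact ⟨_, Finset.mem_filter.mpr ⟨hf_maps.iterate n hx, hn⟩⟩
  · intro a ha
    by_cases hp : a ∈ periodicPts f
    · rw [periodicPerm_apply_of_mem hp, hf_notMem a fun h => ha (Finset.mem_filter.mpr ⟨h, hp⟩)]
    · exact periodicPerm_apply_of_notMem hp
  · intro a ha
    obtain ⟨haW, hp⟩ := Finset.mem_filter.mp ha
    rw [periodicPerm_apply_of_mem hp, hf_mem a haW]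
    exact hg a haW

theorem exists_isCoreOn (W : Finset N) : ∃ σ, H.IsCoreOn W σ := by
  induction W using Finset.strongInduction with
  | H W ih =>
  rcases W.eq_empty_or_nonempty with rfl | hW
  · exact ⟨1, H.isCoreOn_empty⟩
  obtain ⟨K, hKW, hK, τ, hτ, hτK⟩ := H.exists_perm_isUndominatedChoice hW
  obtain ⟨σ, hσ⟩ := ih (W \ K) (Finset.sdiff_ssubset hKW hK)
  exact ⟨σ * τ, hσ.mul hKW hτ hτK⟩

end HousingMarket

/-- every housing market with partially ordered preferences admits an
allocation in its core (e.g. the output of the TTC variant for partial orders). -/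
theorem stmt2 (H : HousingMarket N) : ∃ X : N → N, InCore H X := by
  obtain ⟨σ, -, hacc, hcore⟩ := H.exists_isCoreOn Finset.univ
  exact ⟨σ, ⟨σ.bijective, hacc⟩, fun c ⟨hc, _, hblock⟩ =>
    hcore c hc (fun a _ => Finset.mem_univ a) fun a ha => (hblock a ha).2⟩
end

section
/- The core of housing markets violates the RI-worst property: there exist a housing market H on 5 agents with strict preferences, an agent p, and a (p,q)-improvement H' of H, such that in every core allocation of H agent p receives her top choice, while H' admits a core allocation in which p receives only her second choice. -/
variable {N : Type} [Fintype N] [DecidableEq N]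

/-!
In `H`, agent `0` (the `p` of the statement) ranks `4` above `3`, and every allocation that
does not give her `4` is blocked by one of the cycles `0 → 4 → 0`, `1 → 0 → 3 → 1` or
`1 → 0 → 4 → 1`. Once agent `4` (the `q`) moves `0` to the top of her list, the trading cycle
`0 → 3 → 1 → 4 → 0` gives agents `3` and `4` their top choices; improving on it would
need a cycle of arcs "strictly better than the current house", and these arcs strictly decrease
the potential `![1, 2, 3, 0, 0]`, so there is none.
-/

section Core

variable {A : Type} {H : HousingMarket A} {X : A → A}

theorem IsAllocation.accepts_of_pref (hX : IsAllocation H X) {a b : A}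
    (h : H.pref a (X a) b) : accepts H a b := by
  rcases hX.2 a with e | h'
  · exact Or.inr (by rwa [← e] at h)
  · exact Or.inr (H.trans _ _ _ _ h' h)

variable [DecidableEq A]

theorem not_hasCycle_of_decreasing {R : A → A → Prop} (f : A → ℕ)
    (hf : ∀ a b, R a b → f b < f a) : ¬ HasCycle R := by
  rintro ⟨c, hne, -, hR⟩
  obtain ⟨a, ha, hmin⟩ := c.toFinset.exists_min_image f ((List.toFinset_nonempty_iff c).mpr hne)
  rw [List.mem_toFinset] at ha
  exact (hf _ _ (hR a ha)).not_ge (hmin _ (List.mem_toFinset.mpr (c.next_mem a ha)))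

theorem IsBlockingCycle.hasCycle {c : List A} (hc : IsBlockingCycle H X c) :
    HasCycle fun a b => H.pref a (X a) b :=
  ⟨c, hc.1, hc.2.1, fun a h => (hc.2.2 a h).2⟩

theorem inCore_of_decreasing (hX : IsAllocation H X) (f : A → ℕ)
    (hf : ∀ a b, H.pref a (X a) b → f b < f a) : InCore H X :=
  ⟨hX, fun _ hc => not_hasCycle_of_decreasing f hf hc.hasCycle⟩

theorem IsAllocation.isBlockingCycle (hX : IsAllocation H X) {c : List A} (hne : c ≠ [])
    (hnd : c.Nodup) (h : ∀ a (ha : a ∈ c), H.pref a (X a) (c.next a ha)) :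
    IsBlockingCycle H X c :=
  ⟨hne, hnd, fun a ha => ⟨hX.accepts_of_pref (h a ha), h a ha⟩⟩

theorem IsAllocation.isBlockingCycle_pair (hX : IsAllocation H X) {a b : A} (hab : a ≠ b)
    (ha : H.pref a (X a) b) (hb : H.pref b (X b) a) : IsBlockingCycle H X [a, b] := by
  refine hX.isBlockingCycle (List.cons_ne_nil _ _) (by simpa using hab) fun x hx => ?_
  rcases List.mem_pair.mp hx with rfl | rfl
  · simpa [List.next, List.nextOr] using ha
  · simpa [List.next, List.nextOr, hab.symm] using hb

theorem IsAllocation.isBlockingCycle_triple (hX : IsAllocation H X) {a b c : A}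
    (hab : a ≠ b) (hbc : b ≠ c) (hac : a ≠ c) (ha : H.pref a (X a) b)
    (hb : H.pref b (X b) c) (hc : H.pref c (X c) a) : IsBlockingCycle H X [a, b, c] := by
  refine hX.isBlockingCycle (List.cons_ne_nil _ _) (by simp [hab, hbc, hac]) fun x hx => ?_
  simp only [List.mem_cons, List.not_mem_nil, or_false] at hx
  rcases hx with rfl | rfl | rfl
  · simpa [List.next, List.nextOr] using ha
  · simpa [List.next, List.nextOr, hab.symm] using hb
  · simpa [List.next, List.nextOr, hac.symm, hbc.symm] using hc

end Core

section Rankings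

variable {A : Type} [DecidableEq A]

/-- Agent `a` ranks the houses of `L a ++ [a]`, best first; all other houses are unacceptable. -/
def ofRankings (L : A → List A) : HousingMarket A where
  pref a x y := x ∈ L a ++ [a] ∧ (L a ++ [a]).idxOf y < (L a ++ [a]).idxOf x
  irrefl _ _ h := (lt_irrefl _) h.2
  trans _ _ _ _ h₁ h₂ := ⟨h₁.1, h₂.2.trans h₁.2⟩

instance (L : A → List A) (a x y : A) : Decidable ((ofRankings L).pref a x y) :=
  inferInstanceAs (Decidable (_ ∧ _))

instance {H : HousingMarket A} [∀ a x y, Decidable (H.pref a x y)] (a b : A) :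
    Decidable (accepts H a b) :=
  inferInstanceAs (Decidable (_ ∨ _))

theorem mem_of_accepts_ofRankings {L : A → List A} {a b : A} (h : accepts (ofRankings L) a b) :
    b ∈ L a ++ [a] := by
  rcases h with rfl | ⟨-, h⟩
  · simp
  · exact List.idxOf_lt_length_iff.mp (h.trans_le List.idxOf_le_length)

theorem strictPrefs_ofRankings (L : A → List A) : StrictPrefs (ofRankings L) := by
  intro a b c hb hc hbc
  have hb := mem_of_accepts_ofRankings hb
  rcases Nat.lt_trichotomy ((L a ++ [a]).idxOf b) ((L a ++ [a]).idxOf c) with h | h | h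
  · exact Or.inr ⟨mem_of_accepts_ofRankings hc, h⟩
  · exact absurd ((List.idxOf_inj hb).mp h) hbc
  · exact Or.inl ⟨hb, h⟩

theorem ofRankings_update_pref_of_ne (L : A → List A) {q : A} (l : List A) {a : A}
    (ha : a ≠ q) : (ofRankings (Function.update L q l)).pref a = (ofRankings L).pref a := by
  simp only [ofRankings, Function.update_of_ne ha]

end Rankings

abbrev rankings : Fin 5 → List (Fin 5) :=
  ![[4, 3], [0, 4], [1, 3], [1], [1, 0, 3]]

abbrev marketH : HousingMarket (Fin 5) := ofRankings rankings

abbrev marketH' : HousingMarket (Fin 5) := ofRankings (Function.update rankings 4 [0, 1, 3])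

theorem isPQImprovement_marketH : IsPQImprovement marketH marketH' 0 4 :=
  ⟨fun _ ha => (ofRankings_update_pref_of_ne rankings _ ha).symm, by decide, by decide⟩

-- Nobody accepts agent `2`, so only the houses of agents `0`, `1`, `3` and `4` matter.
set_option synthInstance.maxSize 256 in
theorem marketH_eq_four_of_unblocked : ∀ x0 x1 x3 x4 : Fin 5,
    accepts marketH 0 x0 → accepts marketH 1 x1 → accepts marketH 3 x3 →
    accepts marketH 4 x4 → [x0, x1, x3, x4].Nodup →
    ¬ (marketH.pref 0 x0 4 ∧ marketH.pref 4 x4 0) →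
    ¬ (marketH.pref 1 x1 0 ∧ marketH.pref 0 x0 3 ∧ marketH.pref 3 x3 1) →
    ¬ (marketH.pref 1 x1 0 ∧ marketH.pref 0 x0 4 ∧ marketH.pref 4 x4 1) → x0 = 4 := by
  decide

theorem marketH_inCore_apply_zero {X : Fin 5 → Fin 5} (hX : InCore marketH X) : X 0 = 4 := by
  obtain ⟨hall, hblock⟩ := hX
  have hnd : [X 0, X 1, X 3, X 4].Nodup :=
    (by decide : [(0 : Fin 5), 1, 3, 4].Nodup).map hall.1.1
  refine marketH_eq_four_of_unblocked _ _ _ _ (hall.2 0) (hall.2 1) (hall.2 3) (hall.2 4) hnd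
    ?_ ?_ ?_
  · exact fun ⟨h0, h4⟩ => hblock _ (hall.isBlockingCycle_pair (by decide) h0 h4)
  · exact fun ⟨h1, h0, h3⟩ =>
      hblock _ (hall.isBlockingCycle_triple (by decide) (by decide) (by decide) h1 h0 h3)
  · exact fun ⟨h1, h0, h4⟩ =>
      hblock _ (hall.isBlockingCycle_triple (by decide) (by decide) (by decide) h1 h0 h4)

theorem marketH'_inCore : InCore marketH' ![3, 4, 2, 1, 0] :=
  inCore_of_decreasing ⟨by decide, by decide⟩ ![1, 2, 3, 0, 0] (by decide)

/-- the core violates the RI-worst property: there is a housing market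
`H` on 5 agents with strict preferences, an agent `p`, a `(p,q)`-improvement `H'`, a
top choice `a` and a second choice `b` of `p`, such that every core allocation of `H`
gives `p` her top choice `a`, yet some core allocation of `H'` gives `p` only `b`. -/
theorem stmt11 :
    ∃ (H H' : HousingMarket (Fin 5)) (p q a b : Fin 5),
      StrictPrefs H ∧ StrictPrefs H' ∧ IsPQImprovement H H' p q ∧
      p ≠ a ∧ p ≠ b ∧ a ≠ b ∧ accepts H p a ∧ accepts H p b ∧
      -- `a` is `p`'s top choice and `b` her second choice in `H`
      (∀ c, accepts H p c → c ≠ a → H.pref p c a) ∧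
      (∀ c, accepts H p c → c ≠ a → c ≠ b → H.pref p c b) ∧
      (∀ X, InCore H X → X p = a) ∧
      (∃ X', InCore H' X' ∧ X' p = b) := by
  refine ⟨marketH, marketH', 0, 4, 4, 3, strictPrefs_ofRankings _, strictPrefs_ofRankings _,
    isPQImprovement_marketH, by decide, by decide, by decide, by decide, by decide, by decide,
    by decide, fun _ => marketH_inCore_apply_zero, _, marketH'_inCore, rfl⟩
end

section
/- Let α_0, β_1, α_1, ..., β_k, α_k be a proposal-rejection alternating sequence in a Stable Roommates instance H with strict preferences, starting from a stable matching M_0 of H − α_0 and inducing matchings M_1, ..., M_k. Then for every i ∈ {1, ..., k}, the matching M_i is stable in the market H − α_i. -/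
variable {N : Type} [Fintype N] [DecidableEq N]

/-- Mutual acceptability for Stable Roommates: `a ≺_a b` iff `b ≺_b a`. -/
def Mutual (H : HousingMarket N) : Prop := ∀ a b, H.pref a a b ↔ H.pref b b a

/-- A matching: an involution on agents, matched pairs being mutually acceptable
(`M a = a` means `a` is unmatched). -/
def IsMatching (H : HousingMarket N) (M : N → N) : Prop :=
  (∀ a, M (M a) = a) ∧ ∀ a, M a ≠ a → H.pref a a (M a)

/-- `{a,b}` is a blocking pair for `M`: each of them is unmatched or prefers
the other to her partner (using the convention `M a = a` for unmatched agents). -/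
def BlockingPair (H : HousingMarket N) (M : N → N) (a b : N) : Prop :=
  a ≠ b ∧ H.pref a (M a) b ∧ H.pref b (M b) a

/-- A stable matching. -/
def IsStableMatching (H : HousingMarket N) (M : N → N) : Prop :=
  IsMatching H M ∧ ∀ a b, ¬ BlockingPair H M a b

/-!
Induction on `i`. In a proposal step every agent other than the rejected `α i` weakly
improves: `β i` trades `α i` for the preferred `α (i-1)`, the unmatched `α (i-1)` gets the
acceptable `β i`, and everybody else keeps her partner. Hence a pair blocking `M i` in
`H − α i` that avoids `α (i-1)` already blocked `M (i-1)` in `H − α (i-1)`, while a pair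
`{α (i-1), z}` would make `z` an agent willing to accept `α (i-1)` whom she prefers to `β i`.
-/

section MatchingBasics

omit [Fintype N] [DecidableEq N]

/-- `M` leaves `a` unmatched and is a stable matching of `H − a`. -/
def IsStableMatchingMinus (H : HousingMarket N) (a : N) (M : N → N) : Prop :=
  IsMatching H M ∧ M a = a ∧ ∀ x y, x ≠ a → y ≠ a → ¬ BlockingPair H M x y

namespace IsMatching

variable {H : HousingMarket N} {M : N → N}

theorem injective (hm : IsMatching H M) : Function.Injective M :=
  Function.LeftInverse.injective hm.1

theorem pref_self_of_pref (hm : IsMatching H M) {x w : N} (h : H.pref x (M x) w) :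
    H.pref x x w := by
  by_cases hx : M x = x
  · rwa [hx] at h
  · exact H.trans x x (M x) w (hm.2 x hx) h

theorem apply_ne_of_unmatched (hm : IsMatching H M) {a x : N} (ha : M a = a) (hx : M x ≠ x) :
    M x ≠ a := fun h => hx (h.trans (by rw [← ha, ← h, hm.1]))

end IsMatching

theorem BlockingPair.symm {H : HousingMarket N} {M : N → N} {x y : N}
    (h : BlockingPair H M x y) : BlockingPair H M y x :=
  ⟨h.1.symm, h.2.2, h.2.1⟩

end MatchingBasics

section ProposalStep

omit [Fintype N]

/-- `b` accepts the proposal of `a` and rejects her partner `M b`. -/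
def proposalStep (M : N → N) (a b : N) : N → N := fun x =>
  if x = M b then M b else if x = b then a else if x = a then b else M x

variable {H : HousingMarket N} {M : N → N} {a b x : N}

@[simp] theorem proposalStep_apply_partner : proposalStep M a b (M b) = M b := by
  simp [proposalStep]

theorem proposalStep_apply_right (hb : M b ≠ b) : proposalStep M a b b = a := by
  simp [proposalStep, Ne.symm hb]

theorem proposalStep_apply_left (hm : IsMatching H M) (ha : M a = a) (hb : M b ≠ b) :
    proposalStep M a b a = b := by
  have hab : a ≠ b := fun h => hb (h ▸ ha)
  simp [proposalStep, (hm.apply_ne_of_unmatched ha hb).symm, hab]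

theorem proposalStep_apply_of_ne (hxMb : x ≠ M b) (hxb : x ≠ b) (hxa : x ≠ a) :
    proposalStep M a b x = M x := by
  simp [proposalStep, hxMb, hxb, hxa]

theorem isMatching_proposalStep (hm : IsMatching H M) (hmut : Mutual H) (ha : M a = a)
    (hb : M b ≠ b) (hba : H.pref b (M b) a) : IsMatching H (proposalStep M a b) := by
  refine ⟨fun x => ?_, fun x hx => ?_⟩
  · by_cases hxMb : x = M b
    · simp [hxMb]
    by_cases hxb : x = b
    · rw [hxb, proposalStep_apply_right hb, proposalStep_apply_left hm ha hb]
    by_cases hxa : x = a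
    · rw [hxa, proposalStep_apply_left hm ha hb, proposalStep_apply_right hb]
    have hMxMb : M x ≠ M b := hm.injective.ne hxb
    have hMxb : M x ≠ b := fun h => hxMb (by rw [← h, hm.1])
    have hMxa : M x ≠ a := fun h => hxa (by rw [← ha, ← h, hm.1])
    rw [proposalStep_apply_of_ne hxMb hxb hxa, proposalStep_apply_of_ne hMxMb hMxb hMxa, hm.1]
  · by_cases hxMb : x = M b
    · simp [hxMb] at hx
    by_cases hxb : x = b
    · rw [hxb, proposalStep_apply_right hb]
      exact hm.pref_self_of_pref hba
    by_cases hxa : x = a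
    · rw [hxa, proposalStep_apply_left hm ha hb]
      exact (hmut b a).1 (hm.pref_self_of_pref hba)
    rw [proposalStep_apply_of_ne hxMb hxb hxa] at hx ⊢
    exact hm.2 x hx

theorem pref_of_pref_proposalStep (hm : IsMatching H M) (hmut : Mutual H) (ha : M a = a)
    (hb : M b ≠ b) (hba : H.pref b (M b) a) (hxMb : x ≠ M b) {w : N}
    (h : H.pref x (proposalStep M a b x) w) : H.pref x (M x) w := by
  by_cases hxb : x = b
  · rw [hxb, proposalStep_apply_right hb] at h
    rw [hxb]
    exact H.trans b (M b) a w hba h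
  by_cases hxa : x = a
  · rw [hxa, proposalStep_apply_left hm ha hb] at h
    rw [hxa, ha]
    exact H.trans a a b w ((hmut b a).1 (hm.pref_self_of_pref hba)) h
  rwa [proposalStep_apply_of_ne hxMb hxb hxa] at h

theorem isStableMatchingMinus_proposalStep (hs : IsStableMatchingMinus H a M) (hmut : Mutual H)
    (hb : M b ≠ b) (hba : H.pref b (M b) a)
    (hbest : ∀ x, H.pref x (M x) a → x ≠ b → H.pref a x b) :
    IsStableMatchingMinus H (M b) (proposalStep M a b) := by
  obtain ⟨hm, ha, hstable⟩ := hs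
  have improve : ∀ {z w}, z ≠ M b → H.pref z (proposalStep M a b z) w → H.pref z (M z) w :=
    fun hz h => pref_of_pref_proposalStep hm hmut ha hb hba hz h
  have no_better_for_a : ∀ z, z ≠ M b → BlockingPair H (proposalStep M a b) a z → False := by
    rintro z hzMb ⟨-, haPz, hzPz⟩
    rw [proposalStep_apply_left hm ha hb] at haPz
    by_cases hzb : z = b
    · exact H.irrefl a b (hzb ▸ haPz)
    · exact H.irrefl a b (H.trans a b z b haPz (hbest z (improve hzMb hzPz) hzb))
  refine ⟨isMatching_proposalStep hm hmut ha hb hba, proposalStep_apply_partner, ?_⟩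
  intro x y hx hy hxy
  by_cases hxa : x = a
  · exact no_better_for_a y hy (hxa ▸ hxy)
  by_cases hya : y = a
  · exact no_better_for_a x hx (hya ▸ hxy.symm)
  exact hstable x y hxa hya ⟨hxy.1, improve hx hxy.2.1, improve hy hxy.2.2⟩

end ProposalStep

theorem stmt13_general (H : HousingMarket N)
    (hmut : Mutual H)
    (k : ℕ) (α β : ℕ → N) (M : ℕ → N → N)
    (h0m : IsMatching H (M 0)) (h0u : M 0 (α 0) = α 0)
    (h0s : ∀ a b, a ≠ α 0 → b ≠ α 0 → ¬ BlockingPair H (M 0) a b)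
    (hstep : ∀ i, 1 ≤ i → i ≤ k →
      -- (i) `β i` is willing to accept `α (i-1)` ...
      H.pref (β i) (M (i-1) (β i)) (α (i-1)) ∧
      -- ... and is the agent most preferred by `α (i-1)` among the willing agents;
      (∀ b, H.pref b (M (i-1) b) (α (i-1)) → b ≠ β i → H.pref (α (i-1)) b (β i)) ∧
      -- (ii) `β i` is matched in `M (i-1)` and `α i` is its partner;
      M (i-1) (β i) ≠ β i ∧ α i = M (i-1) (β i) ∧
      -- (iii) `M i` is obtained from `M (i-1)` by matching `α (i-1)` with `β i`,
      -- leaving `α i` unmatched.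
      (∀ b, M i b = if b = α i then α i else if b = β i then α (i-1)
            else if b = α (i-1) then β i else M (i-1) b)) :
    ∀ i, 1 ≤ i → i ≤ k →
      IsMatching H (M i) ∧ M i (α i) = α i ∧
      ∀ a b, a ≠ α i → b ≠ α i → ¬ BlockingPair H (M i) a b := by
  have stable : ∀ i ≤ k, IsStableMatchingMinus H (α i) (M i) := by
    intro i
    induction i with
    | zero => exact fun _ => ⟨h0m, h0u, h0s⟩
    | succ n ih =>
      intro hle
      obtain ⟨hacc, hbest, hmatched, hα, hM⟩ := hstep (n + 1) (by omega) hle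
      have hM' : M (n + 1) = proposalStep (M n) (α n) (β (n + 1)) :=
        funext fun b => by rw [hM, hα]; rfl
      rw [hM', hα]
      exact isStableMatchingMinus_proposalStep (ih (by omega)) hmut hmatched hacc hbest
  exact fun i _ hi => stable i hi

/-- along a proposal-rejection alternating sequence starting from a
stable matching `M 0` of `H − α 0`, each induced matching `M i` is a stable matching
of `H − α i`. -/
theorem stmt13 (H : HousingMarket N)
    (hmut : Mutual H) (hstrict : StrictPrefs H)
    (k : ℕ) (α β : ℕ → N) (M : ℕ → N → N)
    (h0m : IsMatching H (M 0)) (h0u : M 0 (α 0) = α 0)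
    (h0s : ∀ a b, a ≠ α 0 → b ≠ α 0 → ¬ BlockingPair H (M 0) a b)
    (hstep : ∀ i, 1 ≤ i → i ≤ k →
      -- (i) `β i` is willing to accept `α (i-1)` ...
      H.pref (β i) (M (i-1) (β i)) (α (i-1)) ∧
      -- ... and is the agent most preferred by `α (i-1)` among the willing agents;
      (∀ b, H.pref b (M (i-1) b) (α (i-1)) → b ≠ β i → H.pref (α (i-1)) b (β i)) ∧
      -- (ii) `β i` is matched in `M (i-1)` and `α i` is its partner;
      M (i-1) (β i) ≠ β i ∧ α i = M (i-1) (β i) ∧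
      -- (iii) `M i` is obtained from `M (i-1)` by matching `α (i-1)` with `β i`,
      -- leaving `α i` unmatched.
      (∀ b, M i b = if b = α i then α i else if b = β i then α (i-1)
            else if b = α (i-1) then β i else M (i-1) b)) :
    ∀ i, 1 ≤ i → i ≤ k →
      IsMatching H (M i) ∧ M i (α i) = α i ∧
      ∀ a b, a ≠ α i → b ≠ α i → ¬ BlockingPair H (M i) a b :=
  stmt13_general H hmut k α β M h0m h0u h0s hstep
end

section
/- Let α_0, β_1, α_1, ..., β_k be a proposal-rejection alternating sequence in a Stable Roommates instance with strict preferences that stops at β_k (i.e., β_k is unmatched in M_{k−1}). Then M_k = M_{k−1} ∪ {{α_{k−1}, β_k}} is a stable matching of the whole instance H. -/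
variable {N : Type} [Fintype N] [DecidableEq N]

/-!
Every blocking pair of `M₀` contains `α₀`, and this invariant passes along the sequence:
after `β_i` trades her partner `α_i` for `α_{i-1}`, only the rejected `α_i` can be in a
blocking pair. Indeed, apart from `α_{i-1}`, `α_i` and `β_i` nobody changed partner, and `β_i`
improved, so a blocking pair of `M_i` avoiding `α_{i-1}` and `α_i` already blocked `M_{i-1}`; one containing
`α_{i-1}` would consist of `α_{i-1}` and an agent willing to accept her whom she prefers to
`β_i`, against the choice of `β_i`. When `β_k` is unmatched nobody is rejected, so `M_k` is
stable.
-/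

section

variable {N : Type} {H : HousingMarket N} {m : N → N} {a b : N}

theorem IsMatching.pref_self_of_pref_partner (hm : IsMatching H m) (hw : H.pref b (m b) a) :
    H.pref b b a := by
  by_cases hb : m b = b
  · rwa [hb] at hw
  · exact H.trans _ _ _ _ (hm.2 b hb) hw

theorem ne_of_pref_partner (ha : m a = a) (hw : H.pref b (m b) a) : b ≠ a := by
  rintro rfl
  exact H.irrefl _ _ (ha ▸ hw)

variable [DecidableEq N]

def matchWith (m : N → N) (a b : N) : N → N :=
  fun x => if x = b then a else if x = a then b else m x

/-- `b` leaves her partner `m b`, who becomes unmatched, for `a`. -/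
def rematch (m : N → N) (a b : N) : N → N :=
  fun x => if x = m b then m b else matchWith m a b x

def IsStableExcept (H : HousingMarket N) (m : N → N) (a : N) : Prop :=
  IsMatching H m ∧ m a = a ∧ ∀ x y, x ≠ a → y ≠ a → ¬ BlockingPair H m x y

theorem isMatching_matchWith (hm : IsMatching H m) (hmut : Mutual H) (ha : m a = a)
    (hb : m b = b) (hba : H.pref b b a) : IsMatching H (matchWith m a b) := by
  have hab : a ≠ b := fun h => H.irrefl _ _ (h ▸ hba)
  refine ⟨fun x => ?_, fun x hx => ?_⟩
  · by_cases hxb : x = b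
    · simp [matchWith, hxb, hab]
    by_cases hxa : x = a
    · simp [matchWith, hxa, hab]
    have h1 : m x ≠ a := fun h => hxa (by rw [← hm.1 x, h, ha])
    have h2 : m x ≠ b := fun h => hxb (by rw [← hm.1 x, h, hb])
    simp [matchWith, hxa, hxb, h1, h2, hm.1 x]
  · by_cases hxb : x = b
    · simpa [matchWith, hxb] using hba
    by_cases hxa : x = a
    · simpa [matchWith, hxa, hab] using (hmut b a).1 hba
    simp only [matchWith, hxa, hxb, if_false] at hx ⊢
    exact hm.2 x hx

theorem isMatching_rematch (hm : IsMatching H m) (hmut : Mutual H) (ha : m a = a)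
    (hb : m b ≠ b) (hba : H.pref b b a) : IsMatching H (rematch m a b) := by
  have hab : a ≠ b := fun h => H.irrefl _ _ (h ▸ hba)
  have hca : m b ≠ a := fun h => hab (by rw [← ha, ← h, hm.1])
  refine ⟨fun x => ?_, fun x hx => ?_⟩
  · by_cases hxc : x = m b
    · simp [rematch, hxc]
    by_cases hxb : x = b
    · simp [rematch, matchWith, hxb, hab, hca.symm, hb.symm]
    by_cases hxa : x = a
    · simp [rematch, matchWith, hxa, hab, hca.symm, hb.symm]
    have h1 : m x ≠ m b := fun h => hxb (by rw [← hm.1 x, h, hm.1])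
    have h2 : m x ≠ b := fun h => hxc (by rw [← h, hm.1])
    have h3 : m x ≠ a := fun h => hxa (by rw [← hm.1 x, h, ha])
    simp [rematch, matchWith, hxa, hxb, hxc, h1, h2, h3, hm.1 x]
  · by_cases hxc : x = m b
    · simp [rematch, hxc] at hx
    by_cases hxb : x = b
    · simpa [rematch, matchWith, hxb, hb.symm] using hba
    by_cases hxa : x = a
    · simpa [rematch, matchWith, hxa, hab, hca.symm] using (hmut b a).1 hba
    simp only [rematch, matchWith, hxa, hxb, hxc, if_false] at hx ⊢
    exact hm.2 x hx

theorem pref_partner_of_pref_matchWith (hw : H.pref b (m b) a) {x y : N} (hx : x ≠ a)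
    (h : H.pref x (matchWith m a b x) y) : H.pref x (m x) y := by
  by_cases hxb : x = b
  · subst hxb
    simp only [matchWith, if_true] at h
    exact H.trans _ _ _ _ hw h
  · simpa [matchWith, hxb, hx] using h

theorem not_blockingPair_matchWith (hs : IsStableExcept H m a) (hw : H.pref b (m b) a)
    (hbest : ∀ x, H.pref x (m x) a → x ≠ b → H.pref a x b) (x y : N) :
    ¬ BlockingPair H (matchWith m a b) x y := by
  have hma : matchWith m a b a = b := by simp [matchWith, (ne_of_pref_partner hs.2.1 hw).symm]
  have hnot_a : ∀ y, y ≠ a → H.pref y (matchWith m a b y) a → ¬ H.pref a b y := by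
    intro y hya hy hay
    have hyb : y ≠ b := by rintro rfl; exact H.irrefl _ _ hay
    exact H.irrefl _ _ (H.trans _ _ _ _ hay
      (hbest y (pref_partner_of_pref_matchWith hw hya hy) hyb))
  rintro ⟨hxy, hx, hy⟩
  by_cases hxa : x = a
  · subst hxa; exact hnot_a y (Ne.symm hxy) hy (hma ▸ hx)
  by_cases hya : y = a
  · subst hya; exact hnot_a x hxy hx (hma ▸ hy)
  exact hs.2.2 x y hxa hya ⟨hxy, pref_partner_of_pref_matchWith hw hxa hx,
    pref_partner_of_pref_matchWith hw hya hy⟩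

theorem isStableExcept_rematch (hs : IsStableExcept H m a) (hmut : Mutual H)
    (hw : H.pref b (m b) a) (hbest : ∀ x, H.pref x (m x) a → x ≠ b → H.pref a x b)
    (hb : m b ≠ b) : IsStableExcept H (rematch m a b) (m b) := by
  refine ⟨isMatching_rematch hs.1 hmut hs.2.1 hb (hs.1.pref_self_of_pref_partner hw),
    by simp [rematch], fun x y hx hy hxy => not_blockingPair_matchWith hs hw hbest x y ?_⟩
  simpa [BlockingPair, rematch, hx, hy] using hxy

theorem isStableMatching_matchWith (hs : IsStableExcept H m a) (hmut : Mutual H)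
    (hw : H.pref b (m b) a) (hbest : ∀ x, H.pref x (m x) a → x ≠ b → H.pref a x b)
    (hb : m b = b) : IsStableMatching H (matchWith m a b) :=
  ⟨isMatching_matchWith hs.1 hmut hs.2.1 hb (hs.1.pref_self_of_pref_partner hw),
    not_blockingPair_matchWith hs hw hbest⟩

end

theorem stmt14_general (H : HousingMarket N)
    (hmut : Mutual H)
    (k : ℕ) (α β : ℕ → N) (M : ℕ → N → N)
    (h0m : IsMatching H (M 0)) (h0u : M 0 (α 0) = α 0)
    (h0s : ∀ a b, a ≠ α 0 → b ≠ α 0 → ¬ BlockingPair H (M 0) a b)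
    (hstep : ∀ i, 1 ≤ i → i ≤ k - 1 →
      -- (i) `β i` is willing to accept `α (i-1)` ...
      H.pref (β i) (M (i-1) (β i)) (α (i-1)) ∧
      -- ... and is the agent most preferred by `α (i-1)` among the willing agents;
      (∀ b, H.pref b (M (i-1) b) (α (i-1)) → b ≠ β i → H.pref (α (i-1)) b (β i)) ∧
      -- (ii) `β i` is matched in `M (i-1)` and `α i` is its partner;
      M (i-1) (β i) ≠ β i ∧ α i = M (i-1) (β i) ∧
      -- (iii) `M i` is obtained from `M (i-1)` by matching `α (i-1)` with `β i`,
      -- leaving `α i` unmatched.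
      (∀ b, M i b = if b = α i then α i else if b = β i then α (i-1)
            else if b = α (i-1) then β i else M (i-1) b))
    -- the sequence stops at `β k`: `β k` is unmatched in `M (k-1)`, is willing to
    -- accept `α (k-1)`, and is the most preferred willing agent for `α (k-1)`
    (hstop₁ : M (k-1) (β k) = β k)
    (hstop₂ : H.pref (β k) (M (k-1) (β k)) (α (k-1)))
    (hstop₃ : ∀ b, H.pref b (M (k-1) b) (α (k-1)) → b ≠ β k →
      H.pref (α (k-1)) b (β k)) :
    IsStableMatching H (fun b =>
      if b = β k then α (k-1) else if b = α (k-1) then β k else M (k-1) b) := by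
  have hinv : ∀ i ≤ k - 1, IsStableExcept H (M i) (α i) := by
    intro i
    induction i with
    | zero => exact fun _ => ⟨h0m, h0u, h0s⟩
    | succ i ih =>
      intro hi
      obtain ⟨hw, hbest, hmatched, hα, hM⟩ := hstep (i + 1) (by omega) hi
      simp only [Nat.add_sub_cancel] at hw hbest hmatched hα hM
      have hM' : M (i + 1) = rematch (M i) (α i) (β (i + 1)) := by
        funext x
        rw [hM, hα]
        rfl
      rw [hM', hα]
      exact isStableExcept_rematch (ih (by omega)) hmut hw hbest hmatched
  exact isStableMatching_matchWith (hinv (k - 1) le_rfl) hmut hstop₂ hstop₃ hstop₁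

/-- if a proposal-rejection alternating sequence stops at `β k` (an agent
unmatched in `M (k-1)`), then matching `α (k-1)` with `β k` yields a stable matching of
the whole instance `H`. -/
theorem stmt14 (H : HousingMarket N)
    (hmut : Mutual H) (hstrict : StrictPrefs H)
    (k : ℕ) (α β : ℕ → N) (M : ℕ → N → N)
    (h0m : IsMatching H (M 0)) (h0u : M 0 (α 0) = α 0)
    (h0s : ∀ a b, a ≠ α 0 → b ≠ α 0 → ¬ BlockingPair H (M 0) a b)
    (hstep : ∀ i, 1 ≤ i → i ≤ k - 1 →
      -- (i) `β i` is willing to accept `α (i-1)` ...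
      H.pref (β i) (M (i-1) (β i)) (α (i-1)) ∧
      -- ... and is the agent most preferred by `α (i-1)` among the willing agents;
      (∀ b, H.pref b (M (i-1) b) (α (i-1)) → b ≠ β i → H.pref (α (i-1)) b (β i)) ∧
      -- (ii) `β i` is matched in `M (i-1)` and `α i` is its partner;
      M (i-1) (β i) ≠ β i ∧ α i = M (i-1) (β i) ∧
      -- (iii) `M i` is obtained from `M (i-1)` by matching `α (i-1)` with `β i`,
      -- leaving `α i` unmatched.
      (∀ b, M i b = if b = α i then α i else if b = β i then α (i-1)
            else if b = α (i-1) then β i else M (i-1) b))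
    (hk : 1 ≤ k)
    -- the sequence stops at `β k`: `β k` is unmatched in `M (k-1)`, is willing to
    -- accept `α (k-1)`, and is the most preferred willing agent for `α (k-1)`
    (hstop₁ : M (k-1) (β k) = β k)
    (hstop₂ : H.pref (β k) (M (k-1) (β k)) (α (k-1)))
    (hstop₃ : ∀ b, H.pref b (M (k-1) b) (α (k-1)) → b ≠ β k →
      H.pref (α (k-1)) b (β k)) :
    IsStableMatching H (fun b =>
      if b = β k then α (k-1) else if b = α (k-1) then β k else M (k-1) b) :=
  stmt14_general H hmut k α β M h0m h0u h0s hstep hstop₁ hstop₂ hstop₃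
end

section
/- In a Stable Roommates instance with strict preferences, the set of matched agents is the same in every stable matching; consequently, if an agent is matched in some stable matching, it is matched in all stable matchings. -/
variable {N : Type} [Fintype N] [DecidableEq N]

/-!
Call `x` an `M`-over-`M'` agent if `x` is matched in `M` and strictly prefers
`M x` to `M' x` (being single counting as worst). Stability of `M'` forces the `M`-partner of
such an agent to be an `M'`-over-`M` agent, and symmetrically. Hence `M' ∘ M` maps the finite
set of `M`-over-`M'` agents injectively into itself, and its image consists of agents matched in
`M'`. An agent matched in `M` but single in `M'` lies in that set but not in the image, which
is impossible for an injective self-map of a finite set.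
-/

section LoneWolf

variable {H : HousingMarket N} {M M' : N → N}

def PrefersOver (H : HousingMarket N) (M M' : N → N) (x : N) : Prop :=
  M x ≠ x ∧ (M' x = x ∨ H.pref x (M' x) (M x))

omit [Fintype N] [DecidableEq N] in
theorem prefersOver_partner (hstrict : StrictPrefs H) (hM : IsMatching H M)
    (hM' : IsStableMatching H M') {x : N} (hx : PrefersOver H M M' x) :
    PrefersOver H M' M (M x) := by
  obtain ⟨hxM, hxM'⟩ := hx
  set y := M x
  have hMy : M y = x := hM.1 x
  have hxy : x ≠ y := fun h => hxM h.symm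
  have hyx : H.pref y y x := hMy ▸ hM.2 y (hMy ▸ hxy)
  have hx_wants_y : H.pref x (M' x) y := by
    rcases hxM' with h | h
    · rw [h]; exact hM.2 x hxM
    · exact h
  have hy_rejects_x : ¬ H.pref y (M' y) x := fun h => hM'.2 x y ⟨hxy, hx_wants_y, h⟩
  have hM'y : M' y ≠ y := fun h => hy_rejects_x (by rwa [h])
  have hM'y_ne_x : M' y ≠ x := by
    intro h
    have : M' x = y := h ▸ hM'.1.1 y
    exact H.irrefl x y (this ▸ hx_wants_y)
  refine ⟨hM'y, Or.inr (hMy ▸ ?_)⟩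
  exact (hstrict y (M' y) x (Or.inr (hM'.1.2 y hM'y)) (Or.inr hyx) hM'y_ne_x).resolve_left
    hy_rejects_x

omit [Fintype N] [DecidableEq N] in
theorem mapsTo_prefersOver (hstrict : StrictPrefs H) (hM : IsStableMatching H M)
    (hM' : IsStableMatching H M') :
    Set.MapsTo (M' ∘ M) {x | PrefersOver H M M' x} {z | PrefersOver H M M' z ∧ M' z ≠ z} := by
  intro x hx
  have hy := prefersOver_partner hstrict hM.1 hM' hx
  refine ⟨prefersOver_partner hstrict hM'.1 hM hy, ?_⟩
  simp only [Function.comp_apply, hM'.1.1]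
  exact fun h => hy.1 h.symm

omit [Fintype N] [DecidableEq N] in
theorem IsStableMatching.unmatched_of_unmatched [Finite N] (hstrict : StrictPrefs H)
    (hM : IsStableMatching H M) (hM' : IsStableMatching H M') {a : N} (ha : M' a = a) :
    M a = a := by
  by_contra hMa
  have hmaps := mapsTo_prefersOver hstrict hM hM'
  have hinj : Set.InjOn (M' ∘ M) {x | PrefersOver H M M' x} :=
    ((Function.Involutive.injective hM'.1.1).comp (Function.Involutive.injective hM.1.1)).injOn
  obtain ⟨x, hx, rfl⟩ := (((Set.toFinite _).injOn_iff_bijOn_of_mapsTo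
    (hmaps.mono_right fun _ hz => hz.1)).mp hinj).surjOn (show a ∈ _ from ⟨hMa, Or.inl ha⟩)
  exact (hmaps hx).2 ha

end LoneWolf

theorem stmt16_general (H : HousingMarket N) (hstrict : StrictPrefs H)
    (M M' : N → N) (hM : IsStableMatching H M) (hM' : IsStableMatching H M') :
    ∀ a, M a = a ↔ M' a = a :=
  fun _ => ⟨hM'.unmatched_of_unmatched hstrict hM, hM.unmatched_of_unmatched hstrict hM'⟩

/-- "Lone Wolf" theorem: in a Stable Roommates instance with strict
preferences, the set of matched agents is the same in every stable matching. -/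
theorem stmt16 (H : HousingMarket N) (hmut : Mutual H) (hstrict : StrictPrefs H)
    (M M' : N → N) (hM : IsStableMatching H M) (hM' : IsStableMatching H M') :
    ∀ a, M a = a ↔ M' a = a :=
  stmt16_general H hstrict M M' hM hM'
end
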